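/- Let (Z,d,ν) be a metric measure space in which ν is a doubling Radon measure with doubling constant C_D, let θ ∈ [0,1] and τ ≥ 1. Then there is a constant C ≥ 1 (depending on C_D, θ, τ) and there are countable collections of balls 𝓑^k, k = 0,1,2,…, such that rad(B) is comparable to 2^{−k} for every B ∈ 𝓑^k, the balls in each collection 𝓑^k have uniformly bounded overlap even after inflating each by the factor τ, and for every f ∈ L¹(Z,ν): C⁻¹ I_θ(f,1) ≤ Σ_{k=0}^∞ Σ_{B ∈ 𝓑^k} rad(B)^{−θ} ∫_B |f − f_B| dν ≤ C I_θ(f,4). -/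

import Mathlib

open MeasureTheory Metric Set ENNReal

/-- The Besov energy `I_θ(f,r) = ∫_0^r ∫_Z ⨍_{B(x,t)} |f(y) − f(x)| dν(y) dν(x) dt/t^{1+θ}`. -/
noncomputable def besovEnergy {Z : Type*} [MetricSpace Z] [MeasurableSpace Z]
    (ν : Measure Z) (f : Z → ℝ) (θ r : ℝ) : ℝ≥0∞ :=
  ∫⁻ t in Set.Ioo (0 : ℝ) r,
    (∫⁻ x, (ν (ball x t))⁻¹ * ∫⁻ y in ball x t, ENNReal.ofReal |f y - f x| ∂ν ∂ν) *
      ENNReal.ofReal (t ^ (-(1 + θ)))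

/-!
At scale `ρ = 2⁻ᵏ` take a maximal `ρ/8`-separated set `Nₖ` (it is a `ρ/8`-net) and let `𝓑ᵏ` be
the balls `B(c, 9ρ/8)`, `c ∈ Nₖ`. Doubling makes `Nₖ` countable and, by comparing volumes of the
disjoint balls `B(c, ρ/16)`, bounds the overlap of the `τ`-inflated balls.

Lower bound: for `t ∈ (ρ/2, ρ]` and `x` within `ρ/8` of `c`, `B(x,t) ⊆ B(c, 9ρ/8) ⊆ B(x, 4t)`, so
`⨍_{B(x,t)} |f - f(x)| ≤ C_D² ⨍_B |f - f_B| + |f(x) - f_B|`; integrate over `x` near `c` and over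
`t`. Upper bound: for `t ∈ [3ρ, 4ρ)` and `x ∈ B`, `B ⊆ B(x,t) ⊆ 8B`, so
`|f(x) - f_B| ≤ C_D³ ⨍_{B(x,t)} |f - f(x)|`; bounded overlap turns the sum over `B ∈ 𝓑ᵏ` into one
integral over `Z`, and the intervals `[3ρ, 4ρ)` are disjoint subsets of `(0, 4)`.
-/

open scoped NNReal

theorem exists_pairwise_lt_dist_forall_exists_dist_le (X : Type*) [PseudoMetricSpace X]
    {ε : ℝ} (hε : 0 ≤ ε) :
    ∃ N : Set X, (N.Pairwise fun x y ↦ ε < dist x y) ∧ ∀ x, ∃ c ∈ N, dist x c ≤ ε := by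
  obtain ⟨N, hN⟩ := zorn_subset {N : Set X | IsSeparated (ENNReal.ofReal ε) N}
    fun c hc hchain ↦ ⟨⋃₀ c, (pairwise_sUnion hchain.directedOn).2 hc,
      fun _ ↦ subset_sUnion_of_mem⟩
  have hcov : IsCover ε.toNNReal univ N := .of_maximal_isSeparated <| by
    simpa [Maximal, ENNReal.ofReal] using hN
  refine ⟨N, fun x hx y hy hxy ↦ ?_, fun x ↦ ?_⟩
  · have : ENNReal.ofReal ε < edist x y := hN.prop hx hy hxy
    rwa [edist_dist, ENNReal.ofReal_lt_ofReal_iff_of_nonneg hε] at this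
  · obtain ⟨c, hc, hxc⟩ := hcov (mem_univ x)
    exact ⟨c, hc, (edist_le_ofReal hε).1 hxc⟩

theorem ofReal_abs_sub_setAverage_le {α : Type*} [MeasurableSpace α] {μ : Measure α}
    {s : Set α} {f : α → ℝ} (hf : IntegrableOn f s μ) (hs₀ : μ s ≠ 0) (hs : μ s ≠ ∞) (x : α) :
    ENNReal.ofReal |f x - ⨍ y in s, f y ∂μ| ≤
      (μ s)⁻¹ * ∫⁻ y in s, ENNReal.ofReal |f x - f y| ∂μ := by
  have hconst : IntegrableOn (fun _ ↦ f x) s μ := integrableOn_const hs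
  have hμ : μ.real s ≠ 0 := ENNReal.toReal_ne_zero.2 ⟨hs₀, hs⟩
  have key : f x - ⨍ y in s, f y ∂μ = (μ.real s)⁻¹ * ∫ y in s, (f x - f y) ∂μ := by
    rw [integral_sub hconst hf, setIntegral_const, setAverage_eq, smul_eq_mul, smul_eq_mul]
    field_simp
  rw [key, abs_mul, ENNReal.ofReal_mul (abs_nonneg _), abs_inv, abs_of_nonneg measureReal_nonneg,
    ENNReal.ofReal_inv_of_pos (measureReal_nonneg.lt_of_ne' hμ), measureReal_def,
    ENNReal.ofReal_toReal hs]
  gcongr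
  simpa [Real.enorm_eq_ofReal_abs] using
    enorm_integral_le_lintegral_enorm (μ := μ.restrict s) (fun y ↦ f x - f y)

theorem tsum_setLIntegral_le_of_encard_le {α ι : Type*} [MeasurableSpace α] [Countable ι]
    {μ : Measure α} {s : ι → Set α} (hs : ∀ i, MeasurableSet (s i)) {K : ℝ≥0∞}
    (hK : ∀ x, ({i | x ∈ s i}.encard : ℝ≥0∞) ≤ K) (g : α → ℝ≥0∞) :
    ∑' i, ∫⁻ x in s i, g x ∂μ ≤ K * ∫⁻ x, g x ∂μ := by
  have hcount (x : α) : ∑' i, (s i).indicator 1 x = ({i | x ∈ s i}.encard : ℝ≥0∞) := by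
    rw [← ENNReal.tsum_set_one, tsum_subtype {i | x ∈ s i} (fun _ ↦ (1 : ℝ≥0∞))]
    rfl
  have hle : Measure.sum (fun i ↦ μ.restrict (s i)) ≤ K • μ := by
    refine Measure.le_iff.2 fun A hA ↦ ?_
    calc Measure.sum (fun i ↦ μ.restrict (s i)) A
        = ∑' i, ∫⁻ x in A, (s i).indicator 1 x ∂μ := by
          simp only [Measure.sum_apply _ hA, lintegral_indicator_one (hs _),
            Measure.restrict_apply hA, Measure.restrict_apply (hs _), inter_comm]
      _ = ∫⁻ x in A, ∑' i, (s i).indicator 1 x ∂μ :=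
          (lintegral_tsum fun i ↦ (measurable_one.indicator (hs i)).aemeasurable).symm
      _ ≤ ∫⁻ _ in A, K ∂μ := lintegral_mono fun x ↦ (hcount x).trans_le (hK x)
      _ = (K • μ) A := by simp
  calc ∑' i, ∫⁻ x in s i, g x ∂μ = ∫⁻ x, g x ∂(Measure.sum fun i ↦ μ.restrict (s i)) :=
        (lintegral_sum_measure _ _).symm
    _ ≤ ∫⁻ x, g x ∂(K • μ) := lintegral_mono' hle le_rfl
    _ = K * ∫⁻ x, g x ∂μ := lintegral_smul_measure _ _

theorem Real.rpow_neg_le_mul_mul_rpow_neg {θ a c : ℝ} (hθ : θ ≤ 1) (ha : 0 < a) (hc : 1 ≤ c) :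
    a ^ (-θ) ≤ c * (c * a) ^ (-θ) := by
  have hc₀ : 0 < c := by linarith
  rw [Real.mul_rpow hc₀.le ha.le, ← mul_assoc, mul_comm c, ← Real.rpow_add_one hc₀.ne']
  exact le_mul_of_one_le_left (Real.rpow_nonneg ha.le _) (Real.one_le_rpow hc (by linarith))

theorem lintegral_Ioc_half_rpow_le {θ ρ : ℝ} (hθ : -1 ≤ θ) (hρ : 0 < ρ) :
    ∫⁻ t in Ioc (ρ / 2) ρ, ENNReal.ofReal (t ^ (-(1 + θ))) ≤ ENNReal.ofReal ((ρ / 2) ^ (-θ)) := by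
  have hρ₂ : 0 < ρ / 2 := by positivity
  calc ∫⁻ t in Ioc (ρ / 2) ρ, ENNReal.ofReal (t ^ (-(1 + θ)))
      ≤ ∫⁻ _ in Ioc (ρ / 2) ρ, ENNReal.ofReal ((ρ / 2) ^ (-(1 + θ))) :=
        setLIntegral_mono' measurableSet_Ioc fun t ht ↦ ENNReal.ofReal_le_ofReal <|
          Real.rpow_le_rpow_of_nonpos hρ₂ ht.1.le (by linarith)
    _ = ENNReal.ofReal ((ρ / 2) ^ (-θ)) := by
        rw [setLIntegral_const, Real.volume_Ioc, ← ENNReal.ofReal_mul (by positivity),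
          show -(1 + θ) = -θ - 1 by ring, Real.rpow_sub_one hρ₂.ne',
          show ρ - ρ / 2 = ρ / 2 by ring, div_mul_cancel₀ _ hρ₂.ne']

theorem ofReal_rpow_le_lintegral_Ico {θ ρ : ℝ} (hθ : -1 ≤ θ) (hρ : 0 < ρ) :
    ENNReal.ofReal ((4 * ρ) ^ (-θ) / 4) ≤
      ∫⁻ t in Ico (3 * ρ) (4 * ρ), ENNReal.ofReal (t ^ (-(1 + θ))) := by
  have hρ₄ : 0 < 4 * ρ := by positivity
  calc ENNReal.ofReal ((4 * ρ) ^ (-θ) / 4)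
      = ∫⁻ _ in Ico (3 * ρ) (4 * ρ), ENNReal.ofReal ((4 * ρ) ^ (-(1 + θ))) := by
        rw [setLIntegral_const, Real.volume_Ico, ← ENNReal.ofReal_mul (by positivity),
          show -(1 + θ) = -θ - 1 by ring, Real.rpow_sub_one hρ₄.ne']
        congr 1
        field_simp
        ring
    _ ≤ ∫⁻ t in Ico (3 * ρ) (4 * ρ), ENNReal.ofReal (t ^ (-(1 + θ))) :=
        setLIntegral_mono' measurableSet_Ico fun t ht ↦ ENNReal.ofReal_le_ofReal <|
          Real.rpow_le_rpow_of_nonpos (by linarith [ht.1]) ht.2.le (by linarith)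

theorem lintegral_Ioo_zero_one_le_tsum (g : ℝ → ℝ≥0∞) :
    ∫⁻ t in Ioo 0 1, g t ≤ ∑' k : ℕ, ∫⁻ t in Ioc (((2 : ℝ) ^ k)⁻¹ / 2) ((2 ^ k)⁻¹), g t := by
  refine (lintegral_mono_set fun t (ht : t ∈ Ioo 0 1) ↦ ?_).trans (lintegral_iUnion_le _ _)
  obtain ⟨ht₀, ht₁⟩ := ht
  obtain ⟨k, hk, hk'⟩ := exists_nat_pow_near (one_le_inv_iff₀.2 ⟨ht₀, ht₁.le⟩) one_lt_two
  refine mem_iUnion.2 ⟨k, ?_, ?_⟩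
  · rw [div_eq_mul_inv, ← mul_inv, ← pow_succ]
    exact (inv_lt_comm₀ ht₀ (by positivity)).1 hk'
  · exact (le_inv_comm₀ ht₀ (by positivity)).2 hk

theorem tsum_lintegral_Ico_le (g : ℝ → ℝ≥0∞) :
    ∑' k : ℕ, ∫⁻ t in Ico (3 * ((2 : ℝ) ^ k)⁻¹) (4 * (2 ^ k)⁻¹), g t ≤ ∫⁻ t in Ioo 0 4, g t := by
  have hdisj : Pairwise (Function.onFun Disjoint fun k : ℕ ↦
      Ico (3 * ((2 : ℝ) ^ k)⁻¹) (4 * (2 ^ k)⁻¹)) := by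
    refine (pairwise_disjoint_on _).2 fun k l hkl ↦ Set.disjoint_left.2 fun t htk htl ↦ ?_
    have : ((2 : ℝ) ^ l)⁻¹ ≤ (2 ^ k)⁻¹ / 2 := by
      rw [← inv_mul', ← pow_succ]
      exact inv_anti₀ (by positivity) (pow_le_pow_right₀ one_le_two hkl)
    linarith [htk.1, htl.2, show (0 : ℝ) < (2 ^ k)⁻¹ by positivity]
  rw [← lintegral_iUnion (fun _ ↦ measurableSet_Ico) hdisj]
  refine lintegral_mono_set (iUnion_subset fun k t ht ↦ ⟨?_, ?_⟩)
  · linarith [ht.1, show (0 : ℝ) < (2 ^ k)⁻¹ by positivity]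
  · linarith [ht.2, inv_le_one_of_one_le₀ (one_le_pow₀ (one_le_two (α := ℝ)) (n := k))]

section DoublingSpace

variable {Z : Type*} [MetricSpace Z] [MeasurableSpace Z]

structure IsDoubling (ν : Measure Z) (D : ℝ≥0) : Prop where
  measure_ball_pos {z : Z} {r : ℝ} : 0 < r → 0 < ν (ball z r)
  measure_ball_lt_top {z : Z} {r : ℝ} : 0 < r → ν (ball z r) < ∞
  measure_ball_two_mul_le {z : Z} {r : ℝ} : 0 < r → ν (ball z (2 * r)) ≤ D * ν (ball z r)

/-- `⨍_{B(x,t)} |f(y) − f(x)| dν(y)`, the inner average in `besovEnergy`. -/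
noncomputable def ballAvgDev (ν : Measure Z) (f : Z → ℝ) (x : Z) (t : ℝ) : ℝ≥0∞ :=
  (ν (ball x t))⁻¹ * ∫⁻ y in ball x t, ENNReal.ofReal |f y - f x| ∂ν

/-- `∫_B |f − f_B| dν` for `B = B(z, r)`. -/
noncomputable def ballOscillation (ν : Measure Z) (f : Z → ℝ) (z : Z) (r : ℝ) : ℝ≥0∞ :=
  ∫⁻ y in ball z r, ENNReal.ofReal |f y - ⨍ w in ball z r, f w ∂ν| ∂ν

noncomputable def besovDensity (ν : Measure Z) (f : Z → ℝ) (θ t : ℝ) : ℝ≥0∞ :=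
  (∫⁻ x, ballAvgDev ν f x t ∂ν) * ENNReal.ofReal (t ^ (-(1 + θ)))

/-- `Σ_{B ∈ 𝓑} rad(B)^{−θ} ∫_B |f − f_B| dν` for the balls `𝓑` of radius `r` centred in `N`. -/
noncomputable def weightedOscSum (ν : Measure Z) (f : Z → ℝ) (θ : ℝ) (N : Set Z) (r : ℝ) :
    ℝ≥0∞ :=
  ∑' c : N, ENNReal.ofReal (r ^ (-θ)) * ballOscillation ν f c r

theorem besovEnergy_eq_setLIntegral_besovDensity (ν : Measure Z) (f : Z → ℝ) (θ r : ℝ) :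
    besovEnergy ν f θ r = ∫⁻ t in Ioo 0 r, besovDensity ν f θ t := rfl

variable {ν : Measure Z} {D : ℝ≥0}

theorem IsDoubling.measure_ball_pow_two_mul_le (hν : IsDoubling ν D) (z : Z) {r : ℝ}
    (hr : 0 < r) : ∀ m : ℕ, ν (ball z (2 ^ m * r)) ≤ D ^ m * ν (ball z r)
  | 0 => by simp
  | m + 1 => calc
      ν (ball z (2 ^ (m + 1) * r)) = ν (ball z (2 * (2 ^ m * r))) := by ring_nf
      _ ≤ D * ν (ball z (2 ^ m * r)) := hν.measure_ball_two_mul_le (by positivity)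
      _ ≤ D * (D ^ m * ν (ball z r)) := by grw [hν.measure_ball_pow_two_mul_le z hr m]
      _ = D ^ (m + 1) * ν (ball z r) := by ring

theorem IsDoubling.measure_ball_le_of_subset (hν : IsDoubling ν D) {z w : Z} {r s : ℝ}
    (hs : 0 < s) {m : ℕ} (h : ball z r ⊆ ball w (2 ^ m * s)) :
    ν (ball z r) ≤ D ^ m * ν (ball w s) :=
  (measure_mono h).trans (hν.measure_ball_pow_two_mul_le w hs m)

theorem IsDoubling.inv_measure_ball_le (hν : IsDoubling ν D) {z w : Z} {r s : ℝ}
    (hr : 0 < r) (hs : 0 < s) {m : ℕ} (h : ball z r ⊆ ball w (2 ^ m * s)) :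
    (ν (ball w s))⁻¹ ≤ D ^ m * (ν (ball z r))⁻¹ := by
  rw [← div_eq_mul_inv, ENNReal.le_div_iff_mul_le (.inl (hν.measure_ball_pos hr).ne')
    (.inl (hν.measure_ball_lt_top hr).ne), mul_comm, ← div_eq_mul_inv, ENNReal.div_le_iff_le_mul
    (.inl (hν.measure_ball_pos hs).ne') (.inl (hν.measure_ball_lt_top hs).ne)]
  exact hν.measure_ball_le_of_subset hs h

theorem IsDoubling.ballAvgDev_le (hν : IsDoubling ν D) (f : Z → ℝ) {x c : Z} {ε t R : ℝ}
    (ht : 0 < t) (hxc : dist x c ≤ ε) (htR : t + ε ≤ R) {m : ℕ} (hRt : R + ε ≤ 2 ^ m * t) :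
    ballAvgDev ν f x t ≤ D ^ m * (ν (ball c R))⁻¹ * ballOscillation ν f c R +
      ENNReal.ofReal |f x - ⨍ w in ball c R, f w ∂ν| := by
  set a := ⨍ w in ball c R, f w ∂ν
  have hxt : ν (ball x t) ≠ 0 := (hν.measure_ball_pos ht).ne'
  have hxt' : ν (ball x t) ≠ ∞ := (hν.measure_ball_lt_top ht).ne
  have hint : ∫⁻ y in ball x t, ENNReal.ofReal |f y - f x| ∂ν ≤
      ballOscillation ν f c R + ν (ball x t) * ENNReal.ofReal |f x - a| := calc
    _ ≤ ∫⁻ y in ball x t, (ENNReal.ofReal |f y - a| + ENNReal.ofReal |f x - a|) ∂ν :=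
        lintegral_mono fun y ↦ by
          rw [← ENNReal.ofReal_add (abs_nonneg _) (abs_nonneg _), abs_sub_comm (f x)]
          exact ENNReal.ofReal_le_ofReal (abs_sub_le _ _ _)
    _ = ∫⁻ y in ball x t, ENNReal.ofReal |f y - a| ∂ν +
          ν (ball x t) * ENNReal.ofReal |f x - a| := by
        rw [lintegral_add_right _ measurable_const, setLIntegral_const, mul_comm]
    _ ≤ _ := by
        gcongr
        exact lintegral_mono_set (ball_subset_ball' (by linarith))
  calc ballAvgDev ν f x t
      ≤ (ν (ball x t))⁻¹ * (ballOscillation ν f c R + ν (ball x t) * ENNReal.ofReal |f x - a|) :=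
        mul_le_mul_right hint _
    _ = (ν (ball x t))⁻¹ * ballOscillation ν f c R + ENNReal.ofReal |f x - a| := by
        rw [mul_add, ← mul_assoc, ENNReal.inv_mul_cancel hxt hxt', one_mul]
    _ ≤ _ := by
        gcongr
        exact hν.inv_measure_ball_le (by linarith [dist_nonneg (x := x) (y := c)]) ht
          (ball_subset_ball' (by rw [dist_comm]; linarith))

variable [BorelSpace Z]

theorem IsDoubling.encard_setOf_mem_ball_le (hν : IsDoubling ν D) {N : Set Z} {ε : ℝ}
    (hε : 0 < ε) (hN : N.Pairwise fun x y ↦ ε < dist x y) (x : Z) {r : ℝ} {m : ℕ}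
    (hm : 2 * r + ε / 2 ≤ 2 ^ m * (ε / 2)) :
    ({c ∈ N | x ∈ ball c r}.encard : ℝ≥0∞) ≤ D ^ m := by
  set T := {c ∈ N | x ∈ ball c r}
  rcases T.eq_empty_or_nonempty with hT | ⟨c₀, hc₀⟩
  · simp [hT]
  have hr : 0 < r := dist_nonneg.trans_lt (mem_ball.1 hc₀.2)
  set B := ball x (r + ε / 2)
  have hdisj : Pairwise (Function.onFun Disjoint fun c : T ↦ ball (c : Z) (ε / 2)) :=
    fun c d hcd ↦ ball_disjoint_ball <| by
      linarith [hN c.2.1 d.2.1 (Subtype.coe_ne_coe.2 hcd)]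
  have hsub (c : T) : ball (c : Z) (ε / 2) ⊆ B :=
    ball_subset_ball' <| by linarith [mem_ball'.1 c.2.2]
  have hle (c : T) : ν B ≤ D ^ m * ν (ball (c : Z) (ε / 2)) :=
    hν.measure_ball_le_of_subset (by positivity) <| ball_subset_ball' <| by
      linarith [mem_ball.1 c.2.2]
  have hB : ν B ≠ 0 := (hν.measure_ball_pos (by positivity)).ne'
  have hB' : ν B ≠ ∞ := (hν.measure_ball_lt_top (by positivity)).ne
  refine (ENNReal.mul_le_mul_iff_left hB hB').1 ?_
  calc (T.encard : ℝ≥0∞) * ν B = ∑' _ : T, ν B := (ENNReal.tsum_set_const _ _).symm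
    _ ≤ ∑' c : T, D ^ m * ν (ball (c : Z) (ε / 2)) := ENNReal.tsum_le_tsum hle
    _ = D ^ m * ∑' c : T, ν (ball (c : Z) (ε / 2)) := ENNReal.tsum_mul_left
    _ ≤ D ^ m * ν (⋃ c : T, ball (c : Z) (ε / 2)) := by
      grw [tsum_meas_le_meas_iUnion_of_disjoint ν (fun _ ↦ measurableSet_ball) hdisj]
    _ ≤ D ^ m * ν B := by grw [iUnion_subset hsub]

theorem IsDoubling.countable_of_pairwise_lt_dist (hν : IsDoubling ν D) {N : Set Z} {ε : ℝ}
    (hε : 0 < ε) (hN : N.Pairwise fun x y ↦ ε < dist x y) : N.Countable := by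
  rcases isEmpty_or_nonempty Z with hZ | hZ
  · exact N.to_countable
  obtain ⟨x⟩ := hZ
  have hfin (n : ℕ) : {c ∈ N | x ∈ ball c n}.Finite := by
    obtain ⟨m, hm⟩ := pow_unbounded_of_one_lt ((2 * n + ε / 2) / (ε / 2)) one_lt_two
    have := hν.encard_setOf_mem_ball_le hε hN x (m := m) <| by
      rw [div_lt_iff₀ (by positivity)] at hm; exact hm.le
    rw [← Set.encard_lt_top_iff, ← ENat.toENNReal_lt_top]
    exact this.trans_lt (ENNReal.pow_lt_top ENNReal.coe_lt_top)
  refine (countable_iUnion fun n ↦ (hfin n).countable).mono fun c hc ↦ ?_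
  obtain ⟨n, hn⟩ := exists_nat_gt (dist x c)
  exact mem_iUnion.2 ⟨n, hc, mem_ball.2 hn⟩

theorem IsDoubling.exists_dyadic_nets (hν : IsDoubling ν D) (τ : ℝ) :
    ∃ (K : ℕ) (N : ℕ → Set Z), (∀ k, (N k).Countable) ∧
      (∀ k x, ∃ c ∈ N k, dist x c ≤ ((2 : ℝ) ^ k)⁻¹ / 8) ∧
      ∀ k x, {c ∈ N k | x ∈ ball c (τ * (9 / 8 * ((2 : ℝ) ^ k)⁻¹))}.encard ≤ K := by
  choose N hNsep hNcov using fun k : ℕ ↦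
    exists_pairwise_lt_dist_forall_exists_dist_le Z (by positivity : (0 : ℝ) ≤ (2 ^ k)⁻¹ / 8)
  -- the volume count for radius `τ · 9ρ/8` and separation `ρ/8` needs `36 τ + 1 ≤ 2 ^ m`
  obtain ⟨m, hm⟩ := pow_unbounded_of_one_lt (36 * τ + 1) (one_lt_two (α := ℝ))
  refine ⟨⌈D ^ m⌉₊, N, fun k ↦ hν.countable_of_pairwise_lt_dist (by positivity) (hNsep k),
    hNcov, fun k x ↦ ENat.toENNReal_le.1 ?_⟩
  have hρ : (0 : ℝ) < (2 ^ k)⁻¹ := by positivity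
  calc _ ≤ ((D ^ m : ℝ≥0) : ℝ≥0∞) := by
        push_cast
        exact hν.encard_setOf_mem_ball_le (by positivity) (hNsep k) x <| by
          nlinarith [mul_lt_mul_of_pos_right hm hρ]
    _ ≤ _ := by
        rw [ENat.toENNReal_coe, ← ENNReal.coe_natCast, ENNReal.coe_le_coe]
        exact Nat.le_ceil _

theorem IsDoubling.setLIntegral_ballAvgDev_le (hν : IsDoubling ν D) (f : Z → ℝ) (c : Z)
    {ε t R : ℝ} (ht : 0 < t) (htR : t + ε ≤ R) {m : ℕ} (hRt : R + ε ≤ 2 ^ m * t) :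
    ∫⁻ x in closedBall c ε, ballAvgDev ν f x t ∂ν ≤ (D ^ m + 1) * ballOscillation ν f c R := by
  set K := D ^ m * (ν (ball c R))⁻¹ * ballOscillation ν f c R
  have hsub : closedBall c ε ⊆ ball c R := closedBall_subset_ball (by linarith)
  calc ∫⁻ x in closedBall c ε, ballAvgDev ν f x t ∂ν
      ≤ ∫⁻ x in closedBall c ε, (K + ENNReal.ofReal |f x - ⨍ w in ball c R, f w ∂ν|) ∂ν :=
        setLIntegral_mono' measurableSet_closedBall fun x hx ↦
          hν.ballAvgDev_le f ht hx htR hRt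
    _ = K * ν (closedBall c ε) +
          ∫⁻ x in closedBall c ε, ENNReal.ofReal |f x - ⨍ w in ball c R, f w ∂ν| ∂ν := by
        rw [lintegral_add_left measurable_const, setLIntegral_const]
    _ ≤ K * ν (ball c R) + ballOscillation ν f c R := by
        gcongr
        exact lintegral_mono_set hsub
    _ ≤ (D ^ m + 1) * ballOscillation ν f c R := by
        rw [add_mul, one_mul]
        refine add_le_add ?_ le_rfl
        calc K * ν (ball c R)
            = D ^ m * ballOscillation ν f c R * ((ν (ball c R))⁻¹ * ν (ball c R)) := by ring
          _ ≤ D ^ m * ballOscillation ν f c R := mul_le_of_le_one_right' (ENNReal.inv_mul_le_one _)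

theorem IsDoubling.lintegral_ballAvgDev_le_tsum (hν : IsDoubling ν D) (f : Z → ℝ) {N : Set Z}
    (hN : N.Countable) {ε t R : ℝ} (hcov : ∀ x, ∃ c ∈ N, dist x c ≤ ε) (ht : 0 < t)
    (htR : t + ε ≤ R) (hRt : R + ε ≤ 4 * t) :
    ∫⁻ x, ballAvgDev ν f x t ∂ν ≤ (D ^ 2 + 1) * ∑' c : N, ballOscillation ν f c R := by
  have : Countable N := hN.to_subtype
  have hU : (⋃ c : N, closedBall (c : Z) ε) = univ := eq_univ_of_forall fun x ↦
    let ⟨c, hc, hxc⟩ := hcov x; mem_iUnion.2 ⟨⟨c, hc⟩, hxc⟩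
  calc ∫⁻ x, ballAvgDev ν f x t ∂ν
      = ∫⁻ x in ⋃ c : N, closedBall (c : Z) ε, ballAvgDev ν f x t ∂ν := by
        rw [hU, Measure.restrict_univ]
    _ ≤ ∑' c : N, ∫⁻ x in closedBall (c : Z) ε, ballAvgDev ν f x t ∂ν := lintegral_iUnion_le _ _
    _ ≤ ∑' c : N, (D ^ 2 + 1) * ballOscillation ν f c R := ENNReal.tsum_le_tsum fun c ↦
        hν.setLIntegral_ballAvgDev_le f c ht htR (by linarith)
    _ = (D ^ 2 + 1) * ∑' c : N, ballOscillation ν f c R := ENNReal.tsum_mul_left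

theorem IsDoubling.ballOscillation_le (hν : IsDoubling ν D) {f : Z → ℝ} (hf : Integrable f ν)
    (c : Z) {R t : ℝ} (hR : 0 < R) (hRt : 2 * R ≤ t) {m : ℕ} (htR : t + R ≤ 2 ^ m * R) :
    ballOscillation ν f c R ≤ D ^ m * ∫⁻ x in ball c R, ballAvgDev ν f x t ∂ν := by
  have ht : 0 < t := by linarith
  calc ballOscillation ν f c R ≤ ∫⁻ x in ball c R, D ^ m * ballAvgDev ν f x t ∂ν := by
        refine setLIntegral_mono' measurableSet_ball fun x hx ↦ ?_
        have hx : dist x c < R := hx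
        calc ENNReal.ofReal |f x - ⨍ w in ball c R, f w ∂ν|
            ≤ (ν (ball c R))⁻¹ * ∫⁻ y in ball c R, ENNReal.ofReal |f x - f y| ∂ν :=
              ofReal_abs_sub_setAverage_le hf.integrableOn (hν.measure_ball_pos hR).ne'
                (hν.measure_ball_lt_top hR).ne x
          _ ≤ (D ^ m * (ν (ball x t))⁻¹) * ∫⁻ y in ball x t, ENNReal.ofReal |f y - f x| ∂ν := by
              simp_rw [abs_sub_comm (f x)]
              gcongr
              · exact hν.inv_measure_ball_le ht hR (ball_subset_ball' (by linarith))
              · exact ball_subset_ball' (by rw [dist_comm]; linarith)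
          _ = D ^ m * ballAvgDev ν f x t := mul_assoc _ _ _
    _ = D ^ m * ∫⁻ x in ball c R, ballAvgDev ν f x t ∂ν :=
        lintegral_const_mul' _ _ (ENNReal.pow_ne_top ENNReal.coe_ne_top)

theorem IsDoubling.tsum_ballOscillation_le (hν : IsDoubling ν D) {f : Z → ℝ}
    (hf : Integrable f ν) {N : Set Z} (hN : N.Countable) {R t : ℝ} (hR : 0 < R) {K : ℕ}
    (hK : ∀ x, {c ∈ N | x ∈ ball c R}.encard ≤ K) (hRt : 2 * R ≤ t)
    (htR : t + R ≤ 8 * R) :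
    ∑' c : N, ballOscillation ν f c R ≤ D ^ 3 * K * ∫⁻ x, ballAvgDev ν f x t ∂ν := by
  have : Countable N := hN.to_subtype
  have hK' (x : Z) : ({c : N | x ∈ ball (c : Z) R}.encard : ℝ≥0∞) ≤ K := by
    rw [← Subtype.val_injective.injOn.encard_image, ← ENat.toENNReal_coe, ENat.toENNReal_le]
    convert hK x using 2
    ext; simp [and_comm]
  calc ∑' c : N, ballOscillation ν f c R
      ≤ ∑' c : N, D ^ 3 * ∫⁻ x in ball (c : Z) R, ballAvgDev ν f x t ∂ν :=
        ENNReal.tsum_le_tsum fun c ↦ hν.ballOscillation_le hf c hR hRt (by linarith)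
    _ = D ^ 3 * ∑' c : N, ∫⁻ x in ball (c : Z) R, ballAvgDev ν f x t ∂ν := ENNReal.tsum_mul_left
    _ ≤ D ^ 3 * (K * ∫⁻ x, ballAvgDev ν f x t ∂ν) := by
        gcongr
        exact tsum_setLIntegral_le_of_encard_le (fun _ ↦ measurableSet_ball) hK' _
    _ = D ^ 3 * K * ∫⁻ x, ballAvgDev ν f x t ∂ν := (mul_assoc _ _ _).symm

theorem IsDoubling.setLIntegral_Ioc_besovDensity_le (hν : IsDoubling ν D) (f : Z → ℝ) {θ : ℝ}
    (hθ₀ : 0 ≤ θ) (hθ₁ : θ ≤ 1) {N : Set Z} (hN : N.Countable) {ρ : ℝ} (hρ : 0 < ρ)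
    (hcov : ∀ x, ∃ c ∈ N, dist x c ≤ ρ / 8) :
    ∫⁻ t in Ioc (ρ / 2) ρ, besovDensity ν f θ t ≤
      3 * (D ^ 2 + 1) * weightedOscSum ν f θ N (9 / 8 * ρ) := by
  set S := ∑' c : N, ballOscillation ν f c (9 / 8 * ρ)
  have hweight : ENNReal.ofReal ((ρ / 2) ^ (-θ)) ≤ 3 * ENNReal.ofReal ((9 / 8 * ρ) ^ (-θ)) := by
    calc ENNReal.ofReal ((ρ / 2) ^ (-θ)) ≤ ENNReal.ofReal (9 / 4 * (9 / 8 * ρ) ^ (-θ)) := by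
          refine ENNReal.ofReal_le_ofReal ?_
          convert Real.rpow_neg_le_mul_mul_rpow_neg hθ₁ (half_pos hρ) (c := 9 / 4) (by norm_num)
            using 3
          ring
      _ ≤ ENNReal.ofReal (3 * (9 / 8 * ρ) ^ (-θ)) := by gcongr; norm_num
      _ = 3 * ENNReal.ofReal ((9 / 8 * ρ) ^ (-θ)) := by
          rw [ENNReal.ofReal_mul (by norm_num), ENNReal.ofReal_ofNat]
  calc ∫⁻ t in Ioc (ρ / 2) ρ, besovDensity ν f θ t
      ≤ ∫⁻ t in Ioc (ρ / 2) ρ, (D ^ 2 + 1) * S * ENNReal.ofReal (t ^ (-(1 + θ))) :=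
        setLIntegral_mono' measurableSet_Ioc fun t ht ↦ mul_le_mul_left
          (hν.lintegral_ballAvgDev_le_tsum f hN hcov (by linarith [ht.1]) (by linarith [ht.2])
            (by linarith [ht.1])) _
    _ = (D ^ 2 + 1) * S * ∫⁻ t in Ioc (ρ / 2) ρ, ENNReal.ofReal (t ^ (-(1 + θ))) :=
        lintegral_const_mul _ (by fun_prop)
    _ ≤ (D ^ 2 + 1) * S * (3 * ENNReal.ofReal ((9 / 8 * ρ) ^ (-θ))) := by
        grw [lintegral_Ioc_half_rpow_le (by linarith) hρ, hweight]
    _ = 3 * (D ^ 2 + 1) * weightedOscSum ν f θ N (9 / 8 * ρ) := by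
        rw [weightedOscSum, ENNReal.tsum_mul_left]
        ring

theorem IsDoubling.weightedOscSum_le (hν : IsDoubling ν D) {f : Z → ℝ} (hf : Integrable f ν)
    {θ : ℝ} (hθ₀ : 0 ≤ θ) (hθ₁ : θ ≤ 1) {N : Set Z} (hN : N.Countable) {ρ : ℝ} (hρ : 0 < ρ)
    {K : ℕ} (hK : ∀ x, {c ∈ N | x ∈ ball c (9 / 8 * ρ)}.encard ≤ K) :
    weightedOscSum ν f θ N (9 / 8 * ρ) ≤
      15 * D ^ 3 * K * ∫⁻ t in Ico (3 * ρ) (4 * ρ), besovDensity ν f θ t := by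
  set S := ∑' c : N, ballOscillation ν f c (9 / 8 * ρ)
  have hweight : ENNReal.ofReal ((9 / 8 * ρ) ^ (-θ)) ≤
      15 * ∫⁻ t in Ico (3 * ρ) (4 * ρ), ENNReal.ofReal (t ^ (-(1 + θ))) := by
    calc ENNReal.ofReal ((9 / 8 * ρ) ^ (-θ)) ≤ ENNReal.ofReal (15 * ((4 * ρ) ^ (-θ) / 4)) := by
          refine ENNReal.ofReal_le_ofReal ?_
          have := Real.rpow_neg_le_mul_mul_rpow_neg hθ₁ (by positivity : 0 < 9 / 8 * ρ)
            (c := 32 / 9) (by norm_num)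
          rw [show 32 / 9 * (9 / 8 * ρ) = 4 * ρ by ring] at this
          linarith [Real.rpow_nonneg (by positivity : 0 ≤ 4 * ρ) (-θ)]
      _ ≤ 15 * ∫⁻ t in Ico (3 * ρ) (4 * ρ), ENNReal.ofReal (t ^ (-(1 + θ))) := by
          rw [ENNReal.ofReal_mul (by norm_num), ENNReal.ofReal_ofNat]
          grw [ofReal_rpow_le_lintegral_Ico (by linarith) hρ]
  calc weightedOscSum ν f θ N (9 / 8 * ρ) = ENNReal.ofReal ((9 / 8 * ρ) ^ (-θ)) * S :=
        ENNReal.tsum_mul_left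
    _ ≤ 15 * ∫⁻ t in Ico (3 * ρ) (4 * ρ), ENNReal.ofReal (t ^ (-(1 + θ))) * S := by
        grw [hweight, mul_assoc, lintegral_mul_const _ (by fun_prop)]
    _ ≤ 15 * ∫⁻ t in Ico (3 * ρ) (4 * ρ),
          ENNReal.ofReal (t ^ (-(1 + θ))) * (D ^ 3 * K * ∫⁻ x, ballAvgDev ν f x t ∂ν) := by
        gcongr 1
        refine setLIntegral_mono' measurableSet_Ico fun t ht ↦ ?_
        gcongr
        exact hν.tsum_ballOscillation_le hf hN (by positivity) hK (by linarith [ht.1])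
          (by linarith [ht.2])
    _ = 15 * D ^ 3 * K * ∫⁻ t in Ico (3 * ρ) (4 * ρ), besovDensity ν f θ t := by
        have : ∫⁻ t in Ico (3 * ρ) (4 * ρ),
            ENNReal.ofReal (t ^ (-(1 + θ))) * (D ^ 3 * K * ∫⁻ x, ballAvgDev ν f x t ∂ν) =
              D ^ 3 * K * ∫⁻ t in Ico (3 * ρ) (4 * ρ), besovDensity ν f θ t := by
          rw [← lintegral_const_mul' _ _ (by finiteness)]
          exact lintegral_congr fun t ↦ by rw [besovDensity]; ring
        rw [this]
        ring

theorem IsDoubling.besovEnergy_one_le (hν : IsDoubling ν D) (f : Z → ℝ) {θ : ℝ} (hθ₀ : 0 ≤ θ)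
    (hθ₁ : θ ≤ 1) {N : ℕ → Set Z} (hN : ∀ k, (N k).Countable)
    (hcov : ∀ k x, ∃ c ∈ N k, dist x c ≤ ((2 : ℝ) ^ k)⁻¹ / 8) :
    besovEnergy ν f θ 1 ≤
      3 * (D ^ 2 + 1) * ∑' k, weightedOscSum ν f θ (N k) (9 / 8 * ((2 : ℝ) ^ k)⁻¹) := by
  rw [besovEnergy_eq_setLIntegral_besovDensity, ← ENNReal.tsum_mul_left]
  exact (lintegral_Ioo_zero_one_le_tsum _).trans <| ENNReal.tsum_le_tsum fun k ↦
    hν.setLIntegral_Ioc_besovDensity_le f hθ₀ hθ₁ (hN k) (by positivity) (hcov k)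

theorem IsDoubling.tsum_weightedOscSum_le (hν : IsDoubling ν D) {f : Z → ℝ}
    (hf : Integrable f ν) {θ : ℝ} (hθ₀ : 0 ≤ θ) (hθ₁ : θ ≤ 1) {N : ℕ → Set Z}
    (hN : ∀ k, (N k).Countable) {K : ℕ}
    (hK : ∀ k x, {c ∈ N k | x ∈ ball c (9 / 8 * ((2 : ℝ) ^ k)⁻¹)}.encard ≤ K) :
    ∑' k, weightedOscSum ν f θ (N k) (9 / 8 * ((2 : ℝ) ^ k)⁻¹) ≤
      15 * D ^ 3 * K * besovEnergy ν f θ 4 := by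
  rw [besovEnergy_eq_setLIntegral_besovDensity]
  calc ∑' k, weightedOscSum ν f θ (N k) (9 / 8 * ((2 : ℝ) ^ k)⁻¹)
      ≤ ∑' k : ℕ, 15 * D ^ 3 * K *
          ∫⁻ t in Ico (3 * ((2 : ℝ) ^ k)⁻¹) (4 * (2 ^ k)⁻¹), besovDensity ν f θ t :=
        ENNReal.tsum_le_tsum fun k ↦
          hν.weightedOscSum_le hf hθ₀ hθ₁ (hN k) (by positivity) (hK k)
    _ = 15 * D ^ 3 * K * ∑' k : ℕ,
          ∫⁻ t in Ico (3 * ((2 : ℝ) ^ k)⁻¹) (4 * (2 ^ k)⁻¹), besovDensity ν f θ t :=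
        ENNReal.tsum_mul_left
    _ ≤ 15 * D ^ 3 * K * ∫⁻ t in Ioo 0 4, besovDensity ν f θ t := by
        grw [tsum_lintegral_Ico_le]

end DoublingSpace

theorem stmt_4_general
    {Z : Type*} [MetricSpace Z] [MeasurableSpace Z] [BorelSpace Z]
    (ν : Measure Z)
    (C_D : ℝ)
    (hdbl : ∀ (z : Z) (r : ℝ), 0 < r →
      ν (ball z (2 * r)) ≤ ENNReal.ofReal C_D * ν (ball z r) ∧
        0 < ν (ball z r) ∧ ν (ball z r) < ⊤)
    (θ : ℝ) (hθ0 : 0 ≤ θ) (hθ1 : θ ≤ 1) (τ : ℝ) (hτ : 1 ≤ τ) :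
    ∃ (C : ℕ) (𝓑 : ℕ → Set (Z × ℝ)), 1 ≤ C ∧
      (∀ k, (𝓑 k).Countable) ∧
      (∀ k, ∀ b ∈ 𝓑 k, ((C : ℝ))⁻¹ * (2 : ℝ) ^ (-(k : ℤ)) ≤ b.2 ∧
        b.2 ≤ (C : ℝ) * (2 : ℝ) ^ (-(k : ℤ))) ∧
      (∀ (k : ℕ) (z : Z), {b ∈ 𝓑 k | z ∈ ball b.1 (τ * b.2)}.Finite ∧
        {b ∈ 𝓑 k | z ∈ ball b.1 (τ * b.2)}.ncard ≤ C) ∧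
      ∀ f : Z → ℝ, Integrable f ν →
        (C : ℝ≥0∞)⁻¹ * besovEnergy ν f θ 1 ≤
            (∑' (k : ℕ) (b : 𝓑 k), ENNReal.ofReal ((b : Z × ℝ).2 ^ (-θ)) *
              ∫⁻ y in ball (b : Z × ℝ).1 (b : Z × ℝ).2,
                ENNReal.ofReal |f y - ⨍ w in ball (b : Z × ℝ).1 (b : Z × ℝ).2, f w ∂ν| ∂ν) ∧
          (∑' (k : ℕ) (b : 𝓑 k), ENNReal.ofReal ((b : Z × ℝ).2 ^ (-θ)) *
              ∫⁻ y in ball (b : Z × ℝ).1 (b : Z × ℝ).2,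
                ENNReal.ofReal |f y - ⨍ w in ball (b : Z × ℝ).1 (b : Z × ℝ).2, f w ∂ν| ∂ν) ≤
            (C : ℝ≥0∞) * besovEnergy ν f θ 4 := by
  set M := ⌈C_D⌉₊
  have hν : IsDoubling ν M := ⟨fun hr ↦ (hdbl _ _ hr).2.1, fun hr ↦ (hdbl _ _ hr).2.2,
    fun hr ↦ (hdbl _ _ hr).1.trans <| by
      gcongr; simpa using ENNReal.ofReal_le_ofReal (Nat.le_ceil C_D)⟩
  obtain ⟨K, N, hN, hNcov, hK⟩ := hν.exists_dyadic_nets τ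
  set ρ : ℕ → ℝ := fun k ↦ ((2 : ℝ) ^ k)⁻¹
  set C := 15 * M ^ 3 * K + 3 * (M ^ 2 + 1) + K
  set 𝓑 : ℕ → Set (Z × ℝ) := fun k ↦ (·, 9 / 8 * ρ k) '' N k
  have hsum (f : Z → ℝ) : (∑' (k : ℕ) (b : 𝓑 k), ENNReal.ofReal ((b : Z × ℝ).2 ^ (-θ)) *
      ∫⁻ y in ball (b : Z × ℝ).1 (b : Z × ℝ).2,
        ENNReal.ofReal |f y - ⨍ w in ball (b : Z × ℝ).1 (b : Z × ℝ).2, f w ∂ν| ∂ν) =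
      ∑' k, weightedOscSum ν f θ (N k) (9 / 8 * ρ k) :=
    tsum_congr fun k ↦ tsum_image (fun b : Z × ℝ ↦ ENNReal.ofReal (b.2 ^ (-θ)) *
      ballOscillation ν f b.1 b.2) (Prod.mk_left_injective (9 / 8 * ρ k)).injOn
  refine ⟨C, 𝓑, by omega, fun k ↦ (hN k).image _, ?_, fun k x ↦ ?_, fun f hf ↦ ⟨?_, ?_⟩⟩
  · rintro k _ ⟨c, -, rfl⟩
    have hC : (3 : ℝ) ≤ C := by exact_mod_cast (show 3 ≤ C by omega)
    have := inv_le_one_of_one_le₀ (show (1 : ℝ) ≤ C by linarith)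
    simp only [zpow_neg, zpow_natCast]
    constructor <;> nlinarith [show 0 < ρ k by positivity]
  · rw [← Set.encard_le_coe_iff_finite_ncard_le]
    calc {b ∈ 𝓑 k | x ∈ ball b.1 (τ * b.2)}.encard
        ≤ ((·, 9 / 8 * ρ k) '' {c ∈ N k | x ∈ ball c (τ * (9 / 8 * ρ k))}).encard :=
          Set.encard_le_encard <| by rintro _ ⟨⟨c, hc, rfl⟩, hx⟩; exact ⟨c, ⟨hc, hx⟩, rfl⟩
      _ ≤ C := (Set.encard_image_le _ _).trans <|
          (hK k x).trans (by exact_mod_cast (show K ≤ C by omega))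
  · rw [hsum, ENNReal.inv_mul_le_iff (by exact_mod_cast (show C ≠ 0 by omega))
      (ENNReal.natCast_ne_top C)]
    refine (hν.besovEnergy_one_le f hθ0 hθ1 hN hNcov).trans ?_
    gcongr
    exact_mod_cast (show 3 * (M ^ 2 + 1) ≤ C by omega)
  · have hKR (k : ℕ) (x : Z) : {c ∈ N k | x ∈ ball c (9 / 8 * ρ k)}.encard ≤ K := by
      refine le_trans (Set.encard_le_encard fun c hc ↦ ?_) (hK k x)
      exact ⟨hc.1, ball_subset_ball (le_mul_of_one_le_left (by positivity) hτ) hc.2⟩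
    rw [hsum]
    refine (hν.tsum_weightedOscSum_le hf hθ0 hθ1 hN hKR).trans ?_
    gcongr
    exact_mod_cast (show 15 * M ^ 3 * K ≤ C by omega)

/-- Characterization of the Besov energy via sums over collections of
balls of dyadic radii (balls are recorded as center-radius pairs `b = (b.1, b.2)`):
there are countable collections `𝓑 k` of balls of radius comparable to `2^{-k}`, with
uniformly bounded overlap even after inflating each ball by the factor `τ`, such that
`C⁻¹ I_θ(f,1) ≤ Σ_k Σ_{B ∈ 𝓑 k} rad(B)^{−θ} ∫_B |f − f_B| dν ≤ C I_θ(f,4)`. -/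
theorem stmt_4
    {Z : Type*} [MetricSpace Z] [MeasurableSpace Z] [BorelSpace Z]
    (ν : Measure Z) [ν.Regular]
    (C_D : ℝ) (hCD : 1 ≤ C_D)
    (hdbl : ∀ (z : Z) (r : ℝ), 0 < r →
      ν (ball z (2 * r)) ≤ ENNReal.ofReal C_D * ν (ball z r) ∧
        0 < ν (ball z r) ∧ ν (ball z r) < ⊤)
    (θ : ℝ) (hθ0 : 0 ≤ θ) (hθ1 : θ ≤ 1) (τ : ℝ) (hτ : 1 ≤ τ) :
    ∃ (C : ℕ) (𝓑 : ℕ → Set (Z × ℝ)), 1 ≤ C ∧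
      (∀ k, (𝓑 k).Countable) ∧
      (∀ k, ∀ b ∈ 𝓑 k, ((C : ℝ))⁻¹ * (2 : ℝ) ^ (-(k : ℤ)) ≤ b.2 ∧
        b.2 ≤ (C : ℝ) * (2 : ℝ) ^ (-(k : ℤ))) ∧
      (∀ (k : ℕ) (z : Z), {b ∈ 𝓑 k | z ∈ ball b.1 (τ * b.2)}.Finite ∧
        {b ∈ 𝓑 k | z ∈ ball b.1 (τ * b.2)}.ncard ≤ C) ∧
      ∀ f : Z → ℝ, Integrable f ν →
        (C : ℝ≥0∞)⁻¹ * besovEnergy ν f θ 1 ≤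
            (∑' (k : ℕ) (b : 𝓑 k), ENNReal.ofReal ((b : Z × ℝ).2 ^ (-θ)) *
              ∫⁻ y in ball (b : Z × ℝ).1 (b : Z × ℝ).2,
                ENNReal.ofReal |f y - ⨍ w in ball (b : Z × ℝ).1 (b : Z × ℝ).2, f w ∂ν| ∂ν) ∧
          (∑' (k : ℕ) (b : 𝓑 k), ENNReal.ofReal ((b : Z × ℝ).2 ^ (-θ)) *
              ∫⁻ y in ball (b : Z × ℝ).1 (b : Z × ℝ).2,
                ENNReal.ofReal |f y - ⨍ w in ball (b : Z × ℝ).1 (b : Z × ℝ).2, f w ∂ν| ∂ν) ≤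
            (C : ℝ≥0∞) * besovEnergy ν f θ 4 :=
  stmt_4_general ν C_D hdbl θ hθ0 hθ1 τ hτ
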